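/- arXiv:1902.03521 — 2 statements merged into one kernel-verified Lean document; each statement's English description precedes it below -/
import Mathlib

section
/- Let G be a countable discrete group acting by nonsingular transformations on a σ-finite measure space (X, μ), let H ≤ G be a subgroup of finite index, and suppose μ̃ is a measure on G/H × X such that the diagonal G-action g·(kH, x) = (gkH, gx) on (G/H × X, μ̃) is nonsingular and ergodic, and the restriction of μ̃ to {H} × X equals μ. Then the action of H on (X, μ) is ergodic. -/
/-!
A set `s ⊆ X` induces the set `S = {(gH, x) | g⁻¹ • x ∈ s}` of `G/H × X`, which is invariant under
the diagonal `G`-action; when `s` is `H`-invariant, the slice of `S` over the coset `H` is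
exactly `{H} × s`. Ergodicity of `μ̃` makes `S` or its complement null, and restricting to
`{H} × X`, where `μ̃` is `μ`, does the same for `s` or `sᶜ`.
-/

open MeasureTheory

/-- Quotients of groups by subgroups, regarded as countable discrete measurable spaces. -/
instance quotientGroupMeasurableSpace {G : Type*} [Group G] (H : Subgroup G) :
    MeasurableSpace (G ⧸ H) := ⊤

namespace MulAction

variable {G X : Type*} [Group G] [MulAction G X] (H : Subgroup G)

def inducedSet (s : Set X) : Set ((G ⧸ H) × X) :=
  ⋃ g : G, {(g : G ⧸ H)} ×ˢ ((fun x => g⁻¹ • x) ⁻¹' s)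

variable {H}

theorem mem_inducedSet {s : Set X} {z : (G ⧸ H) × X} :
    z ∈ inducedSet H s ↔ ∃ g : G, (g : G ⧸ H) = z.1 ∧ g⁻¹ • z.2 ∈ s := by
  simp only [inducedSet, Set.mem_iUnion, Set.mem_prod, Set.mem_singleton_iff, Set.mem_preimage,
    eq_comm]

theorem measurableSet_inducedSet [Countable G] [MeasurableSpace X]
    (hmeas : ∀ g : G, Measurable fun x : X => g • x) {s : Set X} (hs : MeasurableSet s) :
    MeasurableSet (inducedSet H s) :=
  .iUnion fun g => (MeasurableSet.singleton _).prod (hmeas g⁻¹ hs)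

theorem preimage_diagonal_smul_inducedSet (g : G) (s : Set X) :
    (fun z : (G ⧸ H) × X => (g • z.1, g • z.2)) ⁻¹' inducedSet H s = inducedSet H s := by
  ext ⟨q, x⟩
  simp only [Set.mem_preimage, mem_inducedSet]
  constructor
  · rintro ⟨k, hk, hks⟩
    refine ⟨g⁻¹ * k, ?_, by simpa [mul_smul] using hks⟩
    rw [← smul_eq_mul, ← Quotient.smul_coe, hk, inv_smul_smul]
  · rintro ⟨k, hk, hks⟩
    refine ⟨g * k, ?_, by simpa [mul_smul] using hks⟩
    rw [← smul_eq_mul, ← Quotient.smul_coe, hk]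

theorem mk_one_mem_inducedSet_iff {s : Set X}
    (hinv : ∀ h : H, (fun x : X => (h : G) • x) ⁻¹' s = s) (x : X) :
    (((1 : G) : G ⧸ H), x) ∈ inducedSet H s ↔ x ∈ s := by
  rw [mem_inducedSet]
  constructor
  · rintro ⟨k, hk, hks⟩
    have hkH : k⁻¹ ∈ H := by simpa using QuotientGroup.eq.mp hk
    rwa [← hinv ⟨k⁻¹, hkH⟩]
  · exact fun hx => ⟨1, rfl, by simpa using hx⟩

end MulAction

open MulAction in
theorem stmt13_general {G X : Type*} [Group G] [Countable G] [MulAction G X]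
    [MeasurableSpace X] (μ : Measure X)
    (hmeas : ∀ g : G, Measurable fun x : X => g • x)
    (H : Subgroup G)
    (μt : Measure ((G ⧸ H) × X))
    (hrestrict : ∀ s : Set X, MeasurableSet s → μt ({((1 : G) : G ⧸ H)} ×ˢ s) = μ s)
    (herg : ∀ s : Set ((G ⧸ H) × X), MeasurableSet s →
      (∀ g : G, (fun z : (G ⧸ H) × X => (g • z.1, g • z.2)) ⁻¹' s = s) →
      μt s = 0 ∨ μt sᶜ = 0) :
    ∀ s : Set X, MeasurableSet s → (∀ h : H, (fun x : X => (h : G) • x) ⁻¹' s = s) →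
      μ s = 0 ∨ μ sᶜ = 0 := by
  intro s hs hinv
  have hslice : ∀ x, (((1 : G) : G ⧸ H), x) ∈ inducedSet H s ↔ x ∈ s :=
    mk_one_mem_inducedSet_iff hinv
  rw [← hrestrict s hs, ← hrestrict sᶜ hs.compl]
  refine (herg _ (measurableSet_inducedSet hmeas hs)
    (preimage_diagonal_smul_inducedSet · s)).imp (measure_mono_null ?_) (measure_mono_null ?_)
  · rintro ⟨q, x⟩ ⟨rfl, hx⟩
    exact (hslice x).2 hx
  · rintro ⟨q, x⟩ ⟨rfl, hx⟩
    exact fun hS => hx ((hslice x).1 hS)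

/-- Let `G` be a countable discrete group acting by nonsingular transformations on a σ-finite
measure space `(X, μ)`, let `H ≤ G` have finite index, and suppose `μ̃` is a measure on
`G/H × X` such that the diagonal `G`-action `g·(kH, x) = (gkH, gx)` is nonsingular and ergodic
and the restriction of `μ̃` to `{H} × X` equals `μ`.  Then the `H`-action on `(X, μ)` is
ergodic. -/
theorem stmt13 {G X : Type*} [Group G] [Countable G] [MulAction G X]
    [MeasurableSpace X] (μ : Measure X) [SigmaFinite μ]
    (hmeas : ∀ g : G, Measurable fun x : X => g • x)
    (hns : ∀ (g : G) (s : Set X), MeasurableSet s → (μ s = 0 ↔ μ ((fun x => g • x) ⁻¹' s) = 0))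
    (H : Subgroup G) [H.FiniteIndex]
    (μt : Measure ((G ⧸ H) × X))
    (hrestrict : ∀ s : Set X, MeasurableSet s → μt ({((1 : G) : G ⧸ H)} ×ˢ s) = μ s)
    (hnst : ∀ (g : G) (s : Set ((G ⧸ H) × X)), MeasurableSet s →
      (μt s = 0 ↔ μt ((fun z : (G ⧸ H) × X => (g • z.1, g • z.2)) ⁻¹' s) = 0))
    (herg : ∀ s : Set ((G ⧸ H) × X), MeasurableSet s →
      (∀ g : G, (fun z : (G ⧸ H) × X => (g • z.1, g • z.2)) ⁻¹' s = s) →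
      μt s = 0 ∨ μt sᶜ = 0) :
    ∀ s : Set X, MeasurableSet s → (∀ h : H, (fun x : X => (h : G) • x) ⁻¹' s = s) →
      μ s = 0 ∨ μ sᶜ = 0 :=
  stmt13_general μ hmeas H μt hrestrict herg
end

section
/- Let K = ℚ, m ≥ 1, and let m be the modulus consisting of the real place together with mℤ. Let I_m be the group of fractional ideals of ℚ coprime to m and K_{m,1} = {x ∈ ℚ_{>0} : v_p(x) = 0 for all p | m and x ≡ 1 (mod m)} (as an element of (ℤ/mℤ)^* via numerator and denominator). Then the map (ℤ/mℤ)^* → I_m/i(K_{m,1}) sending the class of a (with gcd(a,m)=1, a > 0) to the class of the ideal aℤ is a well-defined group isomorphism. -/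
/-!
Since the units of `ℤ` are `±1`, every ideal in `Im` has a unique positive generator `a / b`, so
`(a / b)ℤ ↦ a b⁻¹ mod m` is a well-defined homomorphism `Im → (ℤ/mℤ)ˣ`. It is surjective (every
class mod `m` has a positive representative) and its kernel is exactly `P₁ = i(K_{m,1})`; the
isomorphism is the inverse of the map it induces on `Im ⧸ P₁`.
-/

open scoped nonZeroDivisors

open FractionalIdeal in
theorem eq_of_spanSingleton_eq_of_nonneg {x y : ℚ} (hx : 0 ≤ x) (hy : 0 ≤ y)
    (h : spanSingleton ℤ⁰ x = spanSingleton ℤ⁰ y) : x = y := by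
  obtain ⟨z, rfl⟩ := spanSingleton_eq_spanSingleton.mp h
  rcases Int.units_eq_one_or z with rfl | rfl
  · simp
  · simp only [Units.smul_def, Units.val_neg, Units.val_one, neg_smul, one_smul,
      Left.nonneg_neg_iff] at hy ⊢
    linarith

namespace ZMod

theorem unitOfCoprime_mul {m a b : ℕ} (ha : a.Coprime m) (hb : b.Coprime m) :
    unitOfCoprime (a * b) (ha.mul_left hb) = unitOfCoprime a ha * unitOfCoprime b hb :=
  Units.ext <| by simp

@[simp]
theorem unitOfCoprime_one {m : ℕ} : unitOfCoprime 1 (Nat.coprime_one_left m) = 1 :=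
  Units.ext <| by simp

theorem unitOfCoprime_eq_unitOfCoprime_iff {m a b : ℕ} (ha : a.Coprime m) (hb : b.Coprime m) :
    unitOfCoprime a ha = unitOfCoprime b hb ↔ a ≡ b [MOD m] := by
  rw [Units.ext_iff, coe_unitOfCoprime, coe_unitOfCoprime, natCast_eq_natCast_iff]

theorem unitOfCoprime_div_eq_of_div_eq {m a b c d : ℕ} (hb : b ≠ 0) (hd : d ≠ 0)
    (hca : a.Coprime m) (hcb : b.Coprime m) (hcc : c.Coprime m) (hcd : d.Coprime m)
    (h : (a : ℚ) / b = c / d) :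
    unitOfCoprime a hca / unitOfCoprime b hcb = unitOfCoprime c hcc / unitOfCoprime d hcd := by
  rw [div_eq_div_iff (by exact_mod_cast hb) (by exact_mod_cast hd)] at h
  rw [div_eq_div_iff_mul_eq_mul, ← unitOfCoprime_mul, ← unitOfCoprime_mul,
    unitOfCoprime_eq_unitOfCoprime_iff, show a * d = c * b by exact_mod_cast h]

theorem exists_pos_unitOfCoprime_eq {m : ℕ} [NeZero m] (u : (ZMod m)ˣ) :
    ∃ a : ℕ, 0 < a ∧ ∃ ha : a.Coprime m, unitOfCoprime a ha = u := by
  refine ⟨(u : ZMod m).val + m, by have := NeZero.pos m; omega,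
    Nat.coprime_add_self_left.mpr (val_coe_unit_coprime u), Units.ext ?_⟩
  simp

end ZMod

namespace RatRayClass

open FractionalIdeal

variable {m : ℕ} {Im : Subgroup (FractionalIdeal ℤ⁰ ℚ)ˣ}
  (hIm : ∀ I : (FractionalIdeal ℤ⁰ ℚ)ˣ, I ∈ Im ↔
    ∃ a b : ℕ, 0 < a ∧ 0 < b ∧ a.Coprime m ∧ b.Coprime m ∧
      ∃ h : ((a : ℚ) / (b : ℚ)) ≠ 0,
        I = toPrincipalIdeal ℤ ℚ (Units.mk0 ((a : ℚ) / (b : ℚ)) h))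
include hIm

theorem exists_residue (I : Im) :
    ∃ u : (ZMod m)ˣ, ∀ (a b : ℕ) (ha : a.Coprime m) (hb : b.Coprime m) (h : (a : ℚ) / b ≠ 0),
      (I : (FractionalIdeal ℤ⁰ ℚ)ˣ) = toPrincipalIdeal ℤ ℚ (Units.mk0 _ h) →
        u = ZMod.unitOfCoprime a ha / ZMod.unitOfCoprime b hb := by
  obtain ⟨a, b, -, hb0, ha, hb, _, hI⟩ := (hIm I).mp I.2
  refine ⟨ZMod.unitOfCoprime a ha / ZMod.unitOfCoprime b hb, fun c d hc hd h hJ => ?_⟩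
  refine ZMod.unitOfCoprime_div_eq_of_div_eq hb0.ne' (by rintro rfl; simp at h) _ _ _ _
    (eq_of_spanSingleton_eq_of_nonneg (by positivity) (by positivity) ?_)
  simpa only [coe_toPrincipalIdeal, Units.val_mk0] using congrArg Units.val (hI.symm.trans hJ)

/-- The class in `(ℤ/mℤ)ˣ` of `a / b`, where `a / b` is the positive generator of `I`. -/
noncomputable def residue (I : Im) : (ZMod m)ˣ :=
  (exists_residue hIm I).choose

theorem residue_eq {I : Im} {a b : ℕ} (ha : a.Coprime m) (hb : b.Coprime m) {h : (a : ℚ) / b ≠ 0}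
    (hI : (I : (FractionalIdeal ℤ⁰ ℚ)ˣ) = toPrincipalIdeal ℤ ℚ (Units.mk0 _ h)) :
    residue hIm I = ZMod.unitOfCoprime a ha / ZMod.unitOfCoprime b hb :=
  (exists_residue hIm I).choose_spec a b ha hb h hI

theorem residue_mul (I J : Im) : residue hIm (I * J) = residue hIm I * residue hIm J := by
  obtain ⟨a, b, -, -, ha, hb, h, hI⟩ := (hIm I).mp I.2
  obtain ⟨c, d, -, -, hc, hd, h', hJ⟩ := (hIm J).mp J.2
  have hprod : ((a * c : ℕ) : ℚ) / (b * d : ℕ) = (a / b) * (c / d) := by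
    push_cast; exact (div_mul_div_comm _ _ _ _).symm
  have hIJ : ((I * J : Im) : (FractionalIdeal ℤ⁰ ℚ)ˣ) =
      toPrincipalIdeal ℤ ℚ (Units.mk0 _ (hprod ▸ mul_ne_zero h h')) := by
    rw [Subgroup.coe_mul, hI, hJ, ← map_mul]
    congr 1
    exact Units.ext hprod.symm
  rw [residue_eq hIm (ha.mul_left hc) (hb.mul_left hd) hIJ, residue_eq hIm ha hb hI,
    residue_eq hIm hc hd hJ, ZMod.unitOfCoprime_mul, ZMod.unitOfCoprime_mul, mul_div_mul_comm]

noncomputable def residueHom : Im →* (ZMod m)ˣ :=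
  MonoidHom.mk' (residue hIm) (residue_mul hIm)

theorem residueHom_natCast {a : ℕ} (ha : a.Coprime m) {h : (a : ℚ) ≠ 0}
    (hmem : toPrincipalIdeal ℤ ℚ (Units.mk0 _ h) ∈ Im) :
    residueHom hIm ⟨_, hmem⟩ = ZMod.unitOfCoprime a ha := by
  have h₁ : (a : ℚ) / (1 : ℕ) ≠ 0 := by simpa using h
  have hI : toPrincipalIdeal ℤ ℚ (Units.mk0 _ h) = toPrincipalIdeal ℤ ℚ (Units.mk0 _ h₁) := by
    congr 1; exact Units.ext (by simp)
  rw [residueHom, MonoidHom.mk'_apply, residue_eq hIm ha (Nat.coprime_one_left m) hI,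
    ZMod.unitOfCoprime_one, _root_.div_one]

theorem residueHom_surjective [NeZero m] : Function.Surjective (residueHom hIm) := by
  intro u
  obtain ⟨a, ha0, ha, rfl⟩ := ZMod.exists_pos_unitOfCoprime_eq u
  have h : (a : ℚ) ≠ 0 := by positivity
  have hmem : toPrincipalIdeal ℤ ℚ (Units.mk0 _ h) ∈ Im := by
    refine (hIm _).mpr ⟨a, 1, ha0, one_pos, ha, Nat.coprime_one_left m, by simpa using h, ?_⟩
    congr 1; exact Units.ext (by simp)
  exact ⟨_, residueHom_natCast hIm ha hmem⟩

theorem residueHom_eq_one_iff (I : Im) : residueHom hIm I = 1 ↔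
    ∃ a b : ℕ, 0 < a ∧ 0 < b ∧ a.Coprime m ∧ b.Coprime m ∧ a ≡ b [MOD m] ∧
      ∃ h : ((a : ℚ) / (b : ℚ)) ≠ 0,
        (I : (FractionalIdeal ℤ⁰ ℚ)ˣ) = toPrincipalIdeal ℤ ℚ (Units.mk0 ((a : ℚ) / (b : ℚ)) h) := by
  rw [residueHom, MonoidHom.mk'_apply]
  constructor
  · obtain ⟨a, b, ha0, hb0, ha, hb, h, hI⟩ := (hIm I).mp I.2
    rw [residue_eq hIm ha hb hI, div_eq_one, ZMod.unitOfCoprime_eq_unitOfCoprime_iff]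
    exact fun hab => ⟨a, b, ha0, hb0, ha, hb, hab, h, hI⟩
  · rintro ⟨a, b, -, -, ha, hb, hab, h, hI⟩
    rw [residue_eq hIm ha hb hI, div_eq_one, ZMod.unitOfCoprime_eq_unitOfCoprime_iff]
    exact hab

end RatRayClass

open RatRayClass

/-- Let `K = ℚ` with modulus `m = ∞ · mℤ`.  Let `Im` be the group of fractional ideals of `ℚ`
coprime to `m` (every such ideal is `(a/b)ℤ` with `a, b` positive integers coprime to `m`),
and `P₁ = i(K_{m,1})` the subgroup of principal fractional ideals generated by positive
rationals `a/b` with `a ≡ b (mod m)`.  Then the map `(ℤ/mℤ)^* → Im/P₁` sending the class of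
`a` (with `gcd(a,m) = 1`, `a > 0`) to the class of the ideal `aℤ` is a well-defined group
isomorphism. -/
theorem stmt16 (m : ℕ) (hm : 1 ≤ m)
    (Im : Subgroup (FractionalIdeal ℤ⁰ ℚ)ˣ)
    (hIm : ∀ I : (FractionalIdeal ℤ⁰ ℚ)ˣ, I ∈ Im ↔
      ∃ a b : ℕ, 0 < a ∧ 0 < b ∧ a.Coprime m ∧ b.Coprime m ∧
        ∃ h : ((a : ℚ) / (b : ℚ)) ≠ 0,
          I = toPrincipalIdeal ℤ ℚ (Units.mk0 ((a : ℚ) / (b : ℚ)) h))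
    (P₁ : Subgroup Im)
    (hP₁ : ∀ J : Im, J ∈ P₁ ↔
      ∃ a b : ℕ, 0 < a ∧ 0 < b ∧ a.Coprime m ∧ b.Coprime m ∧ a ≡ b [MOD m] ∧
        ∃ h : ((a : ℚ) / (b : ℚ)) ≠ 0,
          (J : (FractionalIdeal ℤ⁰ ℚ)ˣ) = toPrincipalIdeal ℤ ℚ (Units.mk0 ((a : ℚ) / (b : ℚ)) h)) :
    ∃ φ : (ZMod m)ˣ ≃* (Im ⧸ P₁),
      ∀ (a : ℕ) (ha : 0 < a) (hcop : a.Coprime m)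
        (h0 : ((a : ℚ)) ≠ 0) (hmem : toPrincipalIdeal ℤ ℚ (Units.mk0 (a : ℚ) h0) ∈ Im),
        φ (ZMod.unitOfCoprime a hcop) =
          QuotientGroup.mk (⟨toPrincipalIdeal ℤ ℚ (Units.mk0 (a : ℚ) h0), hmem⟩ : Im) := by
  have hker : P₁ = (residueHom hIm).ker := by
    ext I
    rw [hP₁, MonoidHom.mem_ker, residueHom_eq_one_iff hIm]
  have : NeZero m := ⟨by omega⟩
  refine ⟨(QuotientGroup.liftEquiv P₁ (residueHom_surjective hIm) hker).symm, ?_⟩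
  intro a _ hcop h0 hmem
  rw [MulEquiv.symm_apply_eq, QuotientGroup.liftEquiv_mk, residueHom_natCast hIm hcop hmem]
end
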